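/- Let A be a C*-algebra, let π : A → B(H) be a topologically irreducible representation of A whose image π(A) equals the algebra K(H) of compact operators on H, and let τ : A → B(H') be a topologically irreducible representation of A with ker π ⊆ ker τ. Then π and τ are unitarily equivalent: there exists a unitary operator U : H → H' such that τ(a) = U π(a) U* for all a ∈ A. (Consequently the singleton {π} is a closed subset of the spectrum of A, being the set of irreducible representations vanishing on ker π.) -/

import Mathlib

/-! Because `ker π ⊆ ker τ`, the continuous functional calculus gives `‖τ a‖ ≤ ‖π a‖`; as
finite-rank operators are dense in `K(H)`, `τ` cannot vanish on a preimage `p` of a rank-one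
projection `rankOne e e`. Then `τ p` is a nonzero projection fixing some unit vector `e'`, and
`x ↦ τ a e'`, for any `a` with `π a = rankOne x e`, is well defined and isometric, since
`π (star a * b) = ⟪x, y⟫ • π p`. It intertwines `π` with `τ`, so its range is a closed, invariant,
nonzero subspace, hence all of `H'` by the irreducibility of `τ`. -/

open scoped InnerProductSpace CStarAlgebra
open InnerProductSpace

lemma map_eq_map_of_ker_le {M N P F G : Type*} [AddGroup M] [AddGroup N] [AddGroup P]
    [FunLike F M N] [AddMonoidHomClass F M N] [FunLike G M P] [AddMonoidHomClass G M P]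
    {f : F} {g : G} (hker : ∀ a, f a = 0 → g a = 0) {a b : M} (h : f a = f b) : g a = g b := by
  rw [← sub_eq_zero, ← map_sub, hker _ (by rw [map_sub, h, sub_self])]

section Norm
variable {A B C : Type*} [NonUnitalCStarAlgebra A] [NonUnitalCStarAlgebra B]
  [NonUnitalCStarAlgebra C]

lemma IsSelfAdjoint.norm_le_iff_forall_mem_quasispectrum {b : B} (hb : IsSelfAdjoint b) {c : ℝ} :
    ‖b‖ ≤ c ↔ ∀ x ∈ quasispectrum ℝ b, ‖x‖ ≤ c := by
  simpa only [cfcₙ_id' ℝ b] using norm_cfcₙ_le_iff (fun x : ℝ ↦ x) b c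

lemma IsSelfAdjoint.norm_map_le_of_ker_le (φ : A →⋆ₙₐ[ℂ] B) (ψ : A →⋆ₙₐ[ℂ] C)
    (h : ∀ a, φ a = 0 → ψ a = 0) {a : A} (ha : IsSelfAdjoint a) : ‖ψ a‖ ≤ ‖φ a‖ := by
  have hφa : IsSelfAdjoint (φ a) := ha.map φ
  have hψa : IsSelfAdjoint (ψ a) := ha.map ψ
  set K := Metric.closedBall (0 : ℝ) ‖φ a‖
  have hK : (0 : ℝ) ∈ K := Metric.mem_closedBall_self (norm_nonneg _)
  -- `f` vanishes exactly on `K`, so `cfcₙ f b = 0` says that the quasispectrum of `b` lies in `K`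
  set f : ℝ → ℝ := fun t ↦ Metric.infDist t K
  have hf : Continuous f := Metric.continuous_infDist_pt K
  have hf₀ : f 0 = 0 := Metric.infDist_zero_of_mem hK
  have hφ_cfc : cfcₙ f (φ a) = 0 := by
    rw [← cfcₙ_zero ℝ (φ a)]
    refine cfcₙ_congr fun x hx ↦ Metric.infDist_zero_of_mem ?_
    exact mem_closedBall_zero_iff.mpr (hφa.norm_le_iff_forall_mem_quasispectrum.mp le_rfl x hx)
  have hψ_cfc : cfcₙ f (ψ a) = cfcₙ (0 : ℝ → ℝ) (ψ a) := by
    rw [cfcₙ_zero, ← ψ.map_cfcₙ f a, h _ (by rw [φ.map_cfcₙ f a, hφ_cfc])]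
  refine hψa.norm_le_iff_forall_mem_quasispectrum.mpr fun x hx ↦ ?_
  have hfx : f x = 0 := (eqOn_of_cfcₙ_eq_cfcₙ hψ_cfc) hx
  exact mem_closedBall_zero_iff.mp
    ((Metric.isClosed_closedBall.mem_iff_infDist_zero ⟨0, hK⟩).mpr hfx)

lemma NonUnitalStarAlgHom.norm_map_le_of_ker_le (φ : A →⋆ₙₐ[ℂ] B) (ψ : A →⋆ₙₐ[ℂ] C)
    (h : ∀ a, φ a = 0 → ψ a = 0) (a : A) : ‖ψ a‖ ≤ ‖φ a‖ := by
  have := (IsSelfAdjoint.star_mul_self a).norm_map_le_of_ker_le φ ψ h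
  simp only [map_mul, map_star, CStarRing.norm_star_mul_self] at this
  exact mul_self_le_mul_self_iff (norm_nonneg _) (norm_nonneg _) |>.mpr this

end Norm

section
variable {𝕜 E F : Type*} [RCLike 𝕜] [NormedAddCommGroup E] [NormedSpace 𝕜 E]
  [NormedAddCommGroup F] [InnerProductSpace 𝕜 F]

lemma isCompactOperator_rankOne (x : E) (y : F) : IsCompactOperator (rankOne 𝕜 x y) := by
  rw [rankOne_def']
  exact (isCompactOperator_of_locallyCompactSpace_dom (innerSL 𝕜 y)).clm_comp
    (ContinuousLinearMap.toSpanSingleton 𝕜 x)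

lemma IsCompactOperator.exists_norm_sub_sum_rankOne_comp_le {T : E →L[𝕜] F}
    (hT : IsCompactOperator T) {ε : ℝ} (hε : 0 < ε) :
    ∃ (n : ℕ) (b : Fin n → F), ‖T - (∑ i, rankOne 𝕜 (b i) (b i)) ∘L T‖ ≤ ε := by
  obtain ⟨s, hs, hs_net⟩ := Metric.totallyBounded_iff.mp
    (hT.isCompact_closure_image_closedBall 1).totallyBounded ε hε
  set K := Submodule.span 𝕜 s
  have : FiniteDimensional 𝕜 K := FiniteDimensional.span_of_finite 𝕜 hs
  have hdist : ∀ v : E, ‖v‖ = 1 → ‖T v - K.starProjection (T v)‖ ≤ ε := by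
    intro v hv
    obtain ⟨w, hws, hw⟩ := Set.mem_iUnion₂.mp
      (hs_net (subset_closure ⟨v, by simp [hv], rfl⟩))
    calc ‖T v - K.starProjection (T v)‖ = ⨅ x : K, ‖T v - x‖ := K.starProjection_minimal _
      _ ≤ ‖T v - w‖ :=
        ciInf_le ⟨0, by rintro _ ⟨x, rfl⟩; positivity⟩ (⟨w, Submodule.subset_span hws⟩ : K)
      _ ≤ ε := (mem_ball_iff_norm.mp hw).le
  refine ⟨_, fun i ↦ stdOrthonormalBasis 𝕜 K i, ?_⟩
  rw [← (stdOrthonormalBasis 𝕜 K).starProjection_eq_sum_rankOne]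
  exact ContinuousLinearMap.opNorm_le_of_unit_norm hε.le hdist
end

section
variable {𝕜 E F : Type*} [RCLike 𝕜] [NormedAddCommGroup E] [NormedSpace 𝕜 E]
  [NormedAddCommGroup F] [NormedSpace 𝕜 F]

lemma ContinuousLinearMap.exists_norm_eq_one_apply_eq_self {Q : E →L[𝕜] E}
    (hQ : IsIdempotentElem Q) (hQ₀ : Q ≠ 0) : ∃ v, ‖v‖ = 1 ∧ Q v = v := by
  obtain ⟨w, hw⟩ : ∃ w, Q w ≠ 0 := by
    by_contra! h
    exact hQ₀ (ContinuousLinearMap.ext h)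
  refine ⟨(‖Q w‖⁻¹ : 𝕜) • Q w, norm_smul_inv_norm hw, ?_⟩
  rw [map_smul]
  exact congrArg _ (DFunLike.congr_fun hQ.eq w)

lemma LinearIsometry.surjective_of_intertwines [CompleteSpace E] [Nontrivial E] {ι : Type*}
    (ρ : ι → E → E) (σ : ι → F → F)
    (hσ : ∀ W : Submodule 𝕜 F, IsClosed (W : Set F) → (∀ i, ∀ v ∈ W, σ i v ∈ W) → W = ⊥ ∨ W = ⊤)
    (U : E →ₗᵢ[𝕜] F) (hU : ∀ i x, σ i (U x) = U (ρ i x)) : Function.Surjective U := by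
  have hclosed : IsClosed (LinearMap.range U.toLinearMap : Set F) := by
    rw [LinearMap.coe_range]
    exact U.isometry.isClosedEmbedding.isClosed_range
  have hinv : ∀ i, ∀ v ∈ LinearMap.range U.toLinearMap, σ i v ∈ LinearMap.range U.toLinearMap := by
    rintro i _ ⟨x, rfl⟩
    exact ⟨ρ i x, (hU i x).symm⟩
  rcases hσ _ hclosed hinv with hbot | htop
  · obtain ⟨x, hx⟩ := exists_ne (0 : E)
    have : U x ∈ (⊥ : Submodule 𝕜 F) := hbot ▸ LinearMap.mem_range_self U.toLinearMap x
    exact (hx (U.injective (by rw [(Submodule.mem_bot 𝕜).mp this, map_zero]))).elim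
  · exact LinearMap.range_eq_top.mp htop
end

section FactorThroughCompacts
variable {A H H' : Type*} [NonUnitalCStarAlgebra A]
  [NormedAddCommGroup H] [InnerProductSpace ℂ H] [CompleteSpace H]
  [NormedAddCommGroup H'] [InnerProductSpace ℂ H'] [CompleteSpace H']
  {π : A →⋆ₙₐ[ℂ] (H →L[ℂ] H)} {τ : A →⋆ₙₐ[ℂ] (H' →L[ℂ] H')}

lemma map_eq_zero_of_forall_map_eq_rankOne (hcomp : ∀ a, IsCompactOperator (π a))
    (hrank : ∀ x y : H, ∃ a, π a = rankOne ℂ x y) (hker : ∀ a, π a = 0 → τ a = 0)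
    (h : ∀ a x y, π a = rankOne ℂ x y → τ a = 0) (a : A) : τ a = 0 := by
  refine norm_le_zero_iff.mp (le_of_forall_pos_le_add fun ε hε ↦ ?_)
  obtain ⟨n, b, hb⟩ := (hcomp a).exists_norm_sub_sum_rankOne_comp_le hε
  choose c hc using fun i ↦ hrank (b i) (b i)
  have hτc : τ (∑ i, c i) = 0 := by
    simp only [map_sum, h _ _ _ (hc _), Finset.sum_const_zero]
  calc ‖τ a‖ = ‖τ (a - (∑ i, c i) * a)‖ := by rw [map_sub, map_mul, hτc, zero_mul, sub_zero]
    _ ≤ ‖π (a - (∑ i, c i) * a)‖ := π.norm_map_le_of_ker_le τ hker _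
    _ = ‖π a - (∑ i, rankOne ℂ (b i) (b i)) ∘L π a‖ := by
      simp only [map_sub, map_mul, map_sum, hc]; rfl
    _ ≤ 0 + ε := by rwa [zero_add]

lemma map_ne_zero_of_map_eq_rankOne_self (hcomp : ∀ a, IsCompactOperator (π a))
    (hrank : ∀ x y : H, ∃ a, π a = rankOne ℂ x y) (hker : ∀ a, π a = 0 → τ a = 0)
    (hτ : ∃ a, τ a ≠ 0) {e : H} (he : ‖e‖ = 1) {p : A} (hp : π p = rankOne ℂ e e) :
    τ p ≠ 0 := by
  intro hτp
  obtain ⟨a, ha⟩ := hτ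
  refine ha (map_eq_zero_of_forall_map_eq_rankOne hcomp hrank hker (fun a x y hxy ↦ ?_) a)
  obtain ⟨b, hb⟩ := hrank x e
  obtain ⟨c, hc⟩ := hrank e y
  have hfactor : π (b * p * c) = π a := by
    simp only [map_mul, hb, hp, hc, hxy, ContinuousLinearMap.mul_def, rankOne_comp_rankOne,
      inner_self_eq_one_of_norm_eq_one he, one_smul]
  rw [← map_eq_map_of_ker_le hker hfactor, map_mul, map_mul, hτp, mul_zero, zero_mul]

lemma inner_map_apply_map_apply (hker : ∀ a, π a = 0 → τ a = 0) {e : H} {p : A}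
    (hp : π p = rankOne ℂ e e) {e' : H'} (he' : ‖e'‖ = 1) (hpe' : τ p e' = e')
    {a b : A} {x y : H} (ha : π a = rankOne ℂ x e) (hb : π b = rankOne ℂ y e) :
    ⟪τ a e', τ b e'⟫_ℂ = ⟪x, y⟫_ℂ := by
  have hab : τ (star a * b) = ⟪x, y⟫_ℂ • τ p := by
    rw [← map_smul]
    refine map_eq_map_of_ker_le hker ?_
    rw [map_mul, map_star, ha, hb, map_smul, hp, ContinuousLinearMap.star_eq_adjoint,
      adjoint_rankOne, ContinuousLinearMap.mul_def, rankOne_comp_rankOne]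
  rw [← ContinuousLinearMap.adjoint_inner_right, ← ContinuousLinearMap.star_eq_adjoint,
    ← map_star, ← mul_apply_eq_comp, ← map_mul, hab, smul_apply, hpe', inner_smul_right,
    inner_self_eq_one_of_norm_eq_one he', mul_one]

lemma exists_linearIsometry_intertwines (hrank : ∀ x y : H, ∃ a, π a = rankOne ℂ x y)
    (hker : ∀ a, π a = 0 → τ a = 0) {e : H} (he : ‖e‖ = 1) {p : A}
    (hp : π p = rankOne ℂ e e) (hτp : τ p ≠ 0) :
    ∃ U : H →ₗᵢ[ℂ] H', ∀ a x, τ a (U x) = U (π a x) := by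
  have hidem : IsIdempotentElem (τ p) := by
    rw [IsIdempotentElem, ← map_mul]
    exact map_eq_map_of_ker_le hker (by rw [map_mul, hp, isIdempotentElem_rankOne_self he])
  obtain ⟨e', he', hpe'⟩ := ContinuousLinearMap.exists_norm_eq_one_apply_eq_self hidem hτp
  choose s hs using fun x ↦ hrank x e
  have hrep : ∀ a x, π a = rankOne ℂ x e → τ a e' = τ (s x) e' := fun a x h ↦ by
    rw [map_eq_map_of_ker_le hker (h.trans (hs x).symm)]
  let u : H →ₗ[ℂ] H' :=
    { toFun x := τ (s x) e'
      map_add' x y := by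
        rw [← hrep (s x + s y) (x + y) (by rw [map_add, hs, hs, map_add]; rfl), map_add]; rfl
      map_smul' c x := by
        rw [← hrep (c • s x) (c • x) (by rw [map_smul, hs, map_smul]; rfl), map_smul]; rfl }
  refine ⟨u.isometryOfInner fun x y ↦ inner_map_apply_map_apply hker hp he' hpe' (hs x) (hs y),
    fun a x ↦ ?_⟩
  have : π (a * s x) = rankOne ℂ (π a x) e := by
    rw [map_mul, hs, ContinuousLinearMap.mul_def, comp_rankOne]
  calc τ a (τ (s x) e') = τ (a * s x) e' := by rw [map_mul]; rfl
    _ = τ (s (π a x)) e' := hrep _ _ this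
end FactorThroughCompacts

theorem irreducible_rep_factoring_through_compacts_unique_general
    {A : Type} [NonUnitalNormedRing A] [StarRing A] [CStarRing A]
    [NormedSpace ℂ A] [IsScalarTower ℂ A A] [SMulCommClass ℂ A A] [StarModule ℂ A]
    [CompleteSpace A]
    {H H' : Type} [NormedAddCommGroup H] [InnerProductSpace ℂ H] [CompleteSpace H]
    [NormedAddCommGroup H'] [InnerProductSpace ℂ H'] [CompleteSpace H']
    (π : A →⋆ₙₐ[ℂ] (H →L[ℂ] H)) (τ : A →⋆ₙₐ[ℂ] (H' →L[ℂ] H'))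
    (hπ_nontriv : Nontrivial H)
    (hτ_ne : ∃ a : A, τ a ≠ 0)
    (hτ_irr : ∀ W : Submodule ℂ H', IsClosed (W : Set H') →
      (∀ a : A, ∀ v ∈ W, τ a v ∈ W) → W = ⊥ ∨ W = ⊤)
    (himg : Set.range (⇑π) = {T : H →L[ℂ] H | IsCompactOperator ⇑T})
    (hker : ∀ a : A, π a = 0 → τ a = 0) :
    ∃ U : H ≃ₗᵢ[ℂ] H', ∀ (a : A) (v : H'), τ a v = U (π a (U.symm v)) := by
  let _ : NonUnitalCStarAlgebra A := {}
  have hcomp (a : A) : IsCompactOperator (π a) :=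
    (himg ▸ Set.mem_range_self a : π a ∈ {T : H →L[ℂ] H | IsCompactOperator T})
  have hrank (x y : H) : ∃ a, π a = rankOne ℂ x y :=
    (himg ▸ isCompactOperator_rankOne x y : rankOne ℂ x y ∈ Set.range π)
  obtain ⟨e, he⟩ := exists_norm_eq H zero_le_one
  obtain ⟨p, hp⟩ := hrank e e
  obtain ⟨U, hU⟩ := exists_linearIsometry_intertwines hrank hker he hp
    (map_ne_zero_of_map_eq_rankOne_self hcomp hrank hker hτ_ne he hp)
  have hsurj := U.surjective_of_intertwines (fun a ↦ π a) (fun a ↦ τ a) hτ_irr hU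
  set V := LinearIsometryEquiv.ofSurjective U hsurj
  refine ⟨V, fun a v ↦ ?_⟩
  obtain ⟨x, rfl⟩ := V.surjective v
  rw [V.symm_apply_apply]
  exact hU a x

/-- If `π` is a topologically irreducible representation of a C*-algebra `A`
whose image is the algebra of compact operators on `H`, then any topologically irreducible
representation `τ` of `A` with `ker π ⊆ ker τ` is unitarily equivalent to `π`. -/
theorem irreducible_rep_factoring_through_compacts_unique
    {A : Type} [NonUnitalNormedRing A] [StarRing A] [CStarRing A]
    [NormedSpace ℂ A] [IsScalarTower ℂ A A] [SMulCommClass ℂ A A] [StarModule ℂ A]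
    [CompleteSpace A]
    {H H' : Type} [NormedAddCommGroup H] [InnerProductSpace ℂ H] [CompleteSpace H]
    [NormedAddCommGroup H'] [InnerProductSpace ℂ H'] [CompleteSpace H']
    (π : A →⋆ₙₐ[ℂ] (H →L[ℂ] H)) (τ : A →⋆ₙₐ[ℂ] (H' →L[ℂ] H'))
    (hπ_nontriv : Nontrivial H) (hπ_ne : ∃ a : A, π a ≠ 0)
    (hπ_irr : ∀ W : Submodule ℂ H, IsClosed (W : Set H) →
      (∀ a : A, ∀ v ∈ W, π a v ∈ W) → W = ⊥ ∨ W = ⊤)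
    (hτ_nontriv : Nontrivial H') (hτ_ne : ∃ a : A, τ a ≠ 0)
    (hτ_irr : ∀ W : Submodule ℂ H', IsClosed (W : Set H') →
      (∀ a : A, ∀ v ∈ W, τ a v ∈ W) → W = ⊥ ∨ W = ⊤)
    (himg : Set.range (⇑π) = {T : H →L[ℂ] H | IsCompactOperator ⇑T})
    (hker : ∀ a : A, π a = 0 → τ a = 0) :
    ∃ U : H ≃ₗᵢ[ℂ] H', ∀ (a : A) (v : H'), τ a v = U (π a (U.symm v)) :=
  irreducible_rep_factoring_through_compacts_unique_general π τ hπ_nontriv hτ_ne hτ_irr himg hker
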